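/- The second moment of the HRT-SOC estimator along the controlled chain equals the value function at the origin: Ẽ[(g(S_N) ∏ᵢ₌₁^N exp(-μᵢ(S_{i-1}) Λ_{Xᵢ}(Xᵢ))/(1-μᵢ(S_{i-1})))²] = C_{0,0}(μ₁,...,μ_N), and hence is at least u(0,0) ≥ α², for any admissible Markov controls μ₁,...,μ_N with values in (-∞,1). -/

import Mathlib

open MeasureTheory Real Set

/-- Partial sum `s + Σ_{k < j} t k` (the state `S` before consuming component `j`). -/
noncomputable def partialSum {M : ℕ} (s : ℝ) (t : Fin M → ℝ) (j : Fin M) : ℝ :=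
  s + ∑ k ∈ Finset.univ.filter (fun k : Fin M => (k : ℕ) < (j : ℕ)), t k

/-- The second-moment cost functional
`C_{n,s}(μ) = Ẽ[g(S_N)² ∏_{i>n} (f_{X_i}(X_i)/f̃_{X_i}(X_i; μ_i(S_{i-1})))² | S_n = s]`,
written as a Lebesgue integral over the remaining increments. -/
noncomputable def cost (N : ℕ) (f : Fin N → ℝ → ℝ) (ft : Fin N → ℝ → ℝ → ℝ)
    (g : ℝ → ℝ) (μ : Fin N → ℝ → ℝ) (n : ℕ) (s : ℝ) : ℝ :=
  ∫ t in {t : Fin (N - n) → ℝ | ∀ j, 0 < t j},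
    (g (s + ∑ j, t j))^2 *
      ∏ j : Fin (N - n),
        (f ⟨n + j, by have := j.isLt; omega⟩ (t j))^2 /
          ft ⟨n + j, by have := j.isLt; omega⟩
            (μ ⟨n + j, by have := j.isLt; omega⟩ (partialSum s t j)) (t j)

/-- The value function `u(n,s)`: infimum of the cost over admissible Markov controls
with values in the parameter set `A`. -/
noncomputable def value (N : ℕ) (f : Fin N → ℝ → ℝ) (ft : Fin N → ℝ → ℝ → ℝ)
    (g : ℝ → ℝ) (A : Set ℝ) (n : ℕ) (s : ℝ) : ℝ :=
  ⨅ μ : {μ : Fin N → ℝ → ℝ // ∀ i, Measurable (μ i) ∧ ∀ x, μ i x ∈ A},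
    cost N f ft g μ.1 n s

/-- The hazard function `Λ(x) = -log(1 - F(x))`. -/
noncomputable def hazardFn (F : ℝ → ℝ) (x : ℝ) : ℝ := -Real.log (1 - F x)

/-- The hazard-rate-twisted density `f̃(x; μ) = (1-μ) f(x) exp(μ Λ(x))`. -/
noncomputable def hrtDensity (f F : ℝ → ℝ) (m x : ℝ) : ℝ :=
  (1 - m) * f x * Real.exp (m * hazardFn F x)

open Filter Topology
open scoped ENNReal

/-!
Write `f̃ⱼ` for the twisted density of the `j`-th increment at the current state. The squared
likelihood ratio of the estimator times `∏ f̃ⱼ` is pointwise `g² ∏ fⱼ² / f̃ⱼ`, the cost integrand.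
Since `-(1 - F)^(1 - μ)` is an antiderivative of `f̃`, every `f̃ⱼ` is a probability density
whatever the value of the control, so by Fubini `w = ∏ f̃ⱼ` integrates to one over the orthant.
With `h = g(Σ xⱼ) ∏ fⱼ`, integrating `h²/w - 2αh + α²w = (h - αw)²/w ≥ 0` gives `C ≥ α²` for
every admissible control, hence `u(0,0) ≥ α²`.
-/

theorem tendsto_atTop_add_integral_Ioi_of_hasDerivAt {F f : ℝ → ℝ} {a : ℝ}
    (hcont : ContinuousWithinAt F (Ici a) a) (hderiv : ∀ x ∈ Ioi a, HasDerivAt F (f x) x)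
    (hfi : IntegrableOn f (Ioi a)) : Tendsto F atTop (𝓝 (F a + ∫ x in Ioi a, f x)) := by
  have h := tendsto_limUnder_of_hasDerivAt_of_integrableOn_Ioi hderiv hfi
  rwa [integral_Ioi_of_hasDerivAt_of_tendsto hcont hderiv hfi h, add_sub_cancel]

section HazardRateTwisting

variable {f F : ℝ → ℝ} {m x : ℝ}

theorem exp_mul_hazardFn (hF : F x < 1) : exp (m * hazardFn F x) = (1 - F x) ^ (-m) := by
  rw [hazardFn, rpow_def_of_pos (by linarith)]
  ring_nf

theorem hrtDensity_nonneg (hm : m ≤ 1) (hf : 0 ≤ f x) : 0 ≤ hrtDensity f F m x :=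
  mul_nonneg (mul_nonneg (by linarith) hf) (exp_pos _).le

theorem hrtDensity_ne_zero (hm : m ≠ 1) (hf : f x ≠ 0) : hrtDensity f F m x ≠ 0 :=
  mul_ne_zero (mul_ne_zero (sub_ne_zero.2 hm.symm) hf) (exp_ne_zero _)

theorem sq_exp_div_mul_hrtDensity (hm : m ≠ 1) :
    (exp (-m * hazardFn F x) / (1 - m)) ^ 2 * hrtDensity f F m x
      = f x ^ 2 / hrtDensity f F m x := by
  rcases eq_or_ne (f x) 0 with hf | hf
  · simp [hrtDensity, hf]
  · have : 1 - m ≠ 0 := sub_ne_zero.2 hm.symm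
    rw [hrtDensity, neg_mul, exp_neg]
    field_simp

theorem hasDerivAt_neg_one_sub_rpow (hF : F x < 1) (hderiv : HasDerivAt F (f x) x) :
    HasDerivAt (fun y => -(1 - F y) ^ (1 - m)) (hrtDensity f F m x) x := by
  have h := (hderiv.const_sub 1).rpow_const (p := 1 - m) (Or.inl (by linarith))
  refine h.neg.congr_deriv ?_
  rw [hrtDensity, exp_mul_hazardFn hF, show 1 - m - 1 = -m by ring]
  ring

theorem measurable_hrtDensity_comp (hfm : Measurable f) (hFm : Measurable F) {ν : ℝ → ℝ}
    (hν : Measurable ν) : Measurable (Function.uncurry fun s x => hrtDensity f F (ν s) x) := by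
  unfold hrtDensity hazardFn
  fun_prop

theorem lintegral_hrtDensity_eq_one (hf : ∀ x ∈ Ioi (0:ℝ), 0 ≤ f x)
    (hfpdf : ∫ x in Ioi (0:ℝ), f x = 1) (hFc : Continuous F) (hF0 : F 0 = 0)
    (hFlt : ∀ x > 0, F x < 1) (hderiv : ∀ x > 0, HasDerivAt F (f x) x) (hm : m < 1) :
    ∫⁻ x in Ioi 0, ENNReal.ofReal (hrtDensity f F m x) = 1 := by
  have hfi : IntegrableOn f (Ioi 0) := by
    by_contra h
    rw [integral_undef h] at hfpdf
    exact zero_ne_one hfpdf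
  have hFtop : Tendsto F atTop (𝓝 1) := by
    simpa [hF0, hfpdf] using
      tendsto_atTop_add_integral_Ioi_of_hasDerivAt hFc.continuousWithinAt hderiv hfi
  set G : ℝ → ℝ := fun y => -(1 - F y) ^ (1 - m)
  have hG' : ∀ x ∈ Ioi (0:ℝ), HasDerivAt G (hrtDensity f F m x) x := fun x hx =>
    hasDerivAt_neg_one_sub_rpow (hFlt x hx) (hderiv x hx)
  have hG0 : ContinuousWithinAt G (Ici 0) 0 :=
    ((continuousAt_const.sub hFc.continuousAt).rpow_const
      (Or.inl (by simp [hF0]))).neg.continuousWithinAt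
  have hGtop : Tendsto G atTop (𝓝 0) := by
    have h := ((tendsto_const_nhds (x := (1:ℝ))).sub hFtop).rpow_const (p := 1 - m)
      (Or.inr (by linarith))
    simpa [zero_rpow (by linarith : 1 - m ≠ 0)] using h.neg
  have hnn : ∀ x ∈ Ioi (0:ℝ), 0 ≤ hrtDensity f F m x := fun x hx =>
    hrtDensity_nonneg hm.le (hf x hx)
  rw [← ofReal_integral_eq_lintegral_ofReal (integrableOn_Ioi_deriv_of_nonneg hG0 hG' hnn hGtop)
    ((ae_restrict_iff' measurableSet_Ioi).2 (.of_forall hnn)),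
    integral_Ioi_of_hasDerivAt_of_nonneg hG0 hG' hnn hGtop]
  simp [G, hF0]

end HazardRateTwisting

theorem partialSum_cons_zero {n : ℕ} (s x : ℝ) (y : Fin n → ℝ) :
    partialSum s (Fin.cons x y : Fin (n + 1) → ℝ) 0 = s := by
  simp [partialSum]

theorem partialSum_cons_succ {n : ℕ} (s x : ℝ) (y : Fin n → ℝ) (j : Fin n) :
    partialSum s (Fin.cons x y : Fin (n + 1) → ℝ) j.succ = partialSum (s + x) y j := by
  simp only [partialSum, Finset.sum_filter, Fin.sum_univ_succ, Fin.cons_zero, Fin.cons_succ,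
    Fin.val_zero, Fin.val_succ, Nat.succ_pos, if_true, Nat.succ_lt_succ_iff]
  ring

theorem measurable_partialSum {M : ℕ} (s : ℝ) (j : Fin M) :
    Measurable fun t : Fin M → ℝ => partialSum s t j := by
  unfold partialSum
  fun_prop

theorem measurable_prod_partialSum {M : ℕ} {β : Type*} [CommMonoid β] [MeasurableSpace β]
    [MeasurableMul₂ β] {q : Fin M → ℝ → ℝ → β}
    (hq : ∀ j, Measurable (Function.uncurry (q j))) (s : ℝ) :
    Measurable fun t : Fin M → ℝ => ∏ j, q j (partialSum s t j) (t j) :=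
  Finset.measurable_prod _ fun j _ =>
    (hq j).comp ((measurable_partialSum s j).prodMk (measurable_pi_apply j))

theorem lintegral_prod_partialSum_eq_one {ρ : Measure ℝ} [SigmaFinite ρ] :
    ∀ {M : ℕ} (q : Fin M → ℝ → ℝ → ℝ≥0∞), (∀ j, Measurable (Function.uncurry (q j))) →
      (∀ j s, ∫⁻ x, q j s x ∂ρ = 1) → ∀ s : ℝ,
      ∫⁻ t, ∏ j, q j (partialSum s t j) (t j) ∂Measure.pi (fun _ => ρ) = 1
  | 0, _, _, _, _ => by simp
  | M + 1, q, hq, hq1, s => by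
    have e := (measurePreserving_piFinSuccAbove (fun _ : Fin (M + 1) => ρ) 0).symm
    rw [← e.lintegral_comp (measurable_prod_partialSum hq s), lintegral_prod _ ?meas]
    case meas => exact ((measurable_prod_partialSum hq s).comp e.measurable).aemeasurable
    have hcons (x : ℝ) (y : Fin M → ℝ) :
        (MeasurableEquiv.piFinSuccAbove (fun _ => ℝ) 0).symm (x, y) = Fin.cons x y := by
      simp [MeasurableEquiv.piFinSuccAbove_symm_apply, Fin.consEquiv]
    simp only [hcons, Fin.prod_univ_succ, partialSum_cons_zero, partialSum_cons_succ,
      Fin.cons_zero, Fin.cons_succ,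
      lintegral_const_mul _ (measurable_prod_partialSum (fun j => hq j.succ) _),
      lintegral_prod_partialSum_eq_one _ (fun j => hq j.succ) (fun j => hq1 j.succ), mul_one,
      hq1]

theorem orthant_eq_univ_pi (M : ℕ) :
    {t : Fin M → ℝ | ∀ j, 0 < t j} = univ.pi fun _ => Ioi 0 := by
  ext
  simp

theorem measurableSet_orthant (M : ℕ) : MeasurableSet {t : Fin M → ℝ | ∀ j, 0 < t j} :=
  orthant_eq_univ_pi M ▸ MeasurableSet.univ_pi fun _ => measurableSet_Ioi

theorem integral_orthant_prod_hrtDensity_eq_one {M : ℕ} {f F ν : Fin M → ℝ → ℝ}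
    (hfm : ∀ i, Measurable (f i)) (hf : ∀ i, ∀ x ∈ Ioi (0:ℝ), 0 ≤ f i x)
    (hfpdf : ∀ i, ∫ x in Ioi (0:ℝ), f i x = 1) (hFc : ∀ i, Continuous (F i))
    (hF0 : ∀ i, F i 0 = 0) (hFlt : ∀ i, ∀ x > 0, F i x < 1)
    (hderiv : ∀ i, ∀ x > 0, HasDerivAt (F i) (f i x) x) (hνm : ∀ i, Measurable (ν i))
    (hν : ∀ i x, ν i x < 1) (s : ℝ) :
    IntegrableOn (fun t => ∏ j, hrtDensity (f j) (F j) (ν j (partialSum s t j)) (t j))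
        {t : Fin M → ℝ | ∀ j, 0 < t j} ∧
      ∫ t in {t : Fin M → ℝ | ∀ j, 0 < t j},
        ∏ j, hrtDensity (f j) (F j) (ν j (partialSum s t j)) (t j) = 1 := by
  have hS := orthant_eq_univ_pi M
  have hSm := measurableSet_orthant M
  have hq (j : Fin M) := measurable_hrtDensity_comp (hfm j) (hFc j).measurable (hνm j)
  have hnn : ∀ t ∈ {t : Fin M → ℝ | ∀ j, 0 < t j}, ∀ j,
      0 ≤ hrtDensity (f j) (F j) (ν j (partialSum s t j)) (t j) := fun t ht j =>
    hrtDensity_nonneg (hν j _).le (hf j _ (ht j))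
  have hw : 0 ≤ᵐ[volume.restrict {t : Fin M → ℝ | ∀ j, 0 < t j}]
      fun t => ∏ j, hrtDensity (f j) (F j) (ν j (partialSum s t j)) (t j) :=
    (ae_restrict_iff' hSm).2 (.of_forall fun t ht => Finset.prod_nonneg fun j _ => hnn t ht j)
  have hlin : ∫⁻ t in {t : Fin M → ℝ | ∀ j, 0 < t j},
      ENNReal.ofReal (∏ j, hrtDensity (f j) (F j) (ν j (partialSum s t j)) (t j)) = 1 := by
    rw [setLIntegral_congr_fun hSm fun t ht => ENNReal.ofReal_prod_of_nonneg fun j _ =>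
      hnn t ht j, hS, volume_pi, Measure.restrict_pi_pi]
    exact lintegral_prod_partialSum_eq_one
      (fun j s x => ENNReal.ofReal (hrtDensity (f j) (F j) (ν j s) x))
      (fun j => (hq j).ennreal_ofReal) (fun j _ =>
        lintegral_hrtDensity_eq_one (hf j) (hfpdf j) (hFc j) (hF0 j) (hFlt j) (hderiv j)
          (hν j _)) s
  have hwm := (measurable_prod_partialSum hq s).aestronglyMeasurable
    (μ := volume.restrict {t : Fin M → ℝ | ∀ j, 0 < t j})
  refine ⟨⟨hwm, (hasFiniteIntegral_iff_ofReal hw).2 (by rw [hlin]; exact ENNReal.one_lt_top)⟩, ?_⟩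
  rw [integral_eq_lintegral_of_nonneg_ae hw hwm, hlin, ENNReal.toReal_one]

theorem sq_integral_le_integral_sq_div {X : Type*} [MeasurableSpace X] {ρ : Measure X}
    {h w : X → ℝ} (hw : 0 ≤ᵐ[ρ] w) (hhw : ∀ᵐ x ∂ρ, w x = 0 → h x = 0) (hwi : Integrable w ρ)
    (hw1 : ∫ x, w x ∂ρ ≤ 1) (hci : Integrable (fun x => h x ^ 2 / w x) ρ) :
    (∫ x, h x ∂ρ) ^ 2 ≤ ∫ x, h x ^ 2 / w x ∂ρ := by
  have hc : 0 ≤ ∫ x, h x ^ 2 / w x ∂ρ :=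
    integral_nonneg_of_ae (hw.mono fun x hx => div_nonneg (sq_nonneg _) hx)
  by_cases hhi : Integrable h ρ
  swap
  · rw [integral_undef hhi]
    simpa using hc
  set a := ∫ x, h x ∂ρ
  -- the integrand is `(h - a w)² / w`
  have key : 0 ≤ ∫ x, (h x ^ 2 / w x - 2 * a * h x + a ^ 2 * w x) ∂ρ := by
    refine integral_nonneg_of_ae ((hw.and hhw).mono fun x ⟨(hx : 0 ≤ w x), hx0⟩ => ?_)
    show 0 ≤ h x ^ 2 / w x - 2 * a * h x + a ^ 2 * w x
    rcases hx.eq_or_lt with hx | hx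
    · simp [← hx, hx0 hx.symm]
    · have : h x ^ 2 / w x - 2 * a * h x + a ^ 2 * w x = (h x - a * w x) ^ 2 / w x := by
        field_simp
        ring
      rw [this]
      exact div_nonneg (sq_nonneg _) hx.le
  have hsub : Integrable (fun x => h x ^ 2 / w x - 2 * a * h x) ρ := hci.sub (hhi.const_mul _)
  rw [integral_add hsub (hwi.const_mul _), integral_sub hci (hhi.const_mul _),
    integral_const_mul, integral_const_mul] at key
  nlinarith [mul_le_mul_of_nonneg_left hw1 (sq_nonneg a)]

theorem cost_zero_zero (N : ℕ) (f : Fin N → ℝ → ℝ) (ft : Fin N → ℝ → ℝ → ℝ) (g : ℝ → ℝ)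
    (μ : Fin N → ℝ → ℝ) :
    cost N f ft g μ 0 0 = ∫ t in {t : Fin N → ℝ | ∀ j, 0 < t j},
      g (∑ j, t j) ^ 2 * ∏ j, f j (t j) ^ 2 / ft j (μ j (partialSum 0 t j)) (t j) := by
  simp only [cost, Fin.eta, zero_add]
  rfl

section HRTCost

variable {N : ℕ} {f F : Fin N → ℝ → ℝ} {g : ℝ → ℝ} {ν : Fin N → ℝ → ℝ}

theorem cost_hrtDensity_nonneg (hf : ∀ i, ∀ x ∈ Ioi (0:ℝ), 0 ≤ f i x) (hν : ∀ i x, ν i x ≤ 1) :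
    0 ≤ cost N f (fun i m x => hrtDensity (f i) (F i) m x) g ν 0 0 := by
  rw [cost_zero_zero]
  exact setIntegral_nonneg (measurableSet_orthant N) fun t ht => mul_nonneg (sq_nonneg _)
    (Finset.prod_nonneg fun j _ =>
      div_nonneg (sq_nonneg _) (hrtDensity_nonneg (hν j _) (hf j _ (ht j))))

theorem sq_integral_le_cost_hrtDensity (hfm : ∀ i, Measurable (f i))
    (hf : ∀ i, ∀ x ∈ Ioi (0:ℝ), 0 ≤ f i x) (hfpdf : ∀ i, ∫ x in Ioi (0:ℝ), f i x = 1)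
    (hFc : ∀ i, Continuous (F i)) (hF0 : ∀ i, F i 0 = 0) (hFlt : ∀ i, ∀ x > 0, F i x < 1)
    (hderiv : ∀ i, ∀ x > 0, HasDerivAt (F i) (f i x) x) (hνm : ∀ i, Measurable (ν i))
    (hν : ∀ i x, ν i x < 1)
    (hint : IntegrableOn (fun t => g (∑ j, t j) ^ 2 *
      ∏ j, f j (t j) ^ 2 / hrtDensity (f j) (F j) (ν j (partialSum 0 t j)) (t j))
      {t : Fin N → ℝ | ∀ j, 0 < t j}) :
    (∫ t in {t : Fin N → ℝ | ∀ j, 0 < t j}, g (∑ j, t j) * ∏ j, f j (t j)) ^ 2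
      ≤ cost N f (fun i m x => hrtDensity (f i) (F i) m x) g ν 0 0 := by
  obtain ⟨hwi, hw1⟩ :=
    integral_orthant_prod_hrtDensity_eq_one hfm hf hfpdf hFc hF0 hFlt hderiv hνm hν 0
  have hsq (t : Fin N → ℝ) : g (∑ j, t j) ^ 2 *
      ∏ j, f j (t j) ^ 2 / hrtDensity (f j) (F j) (ν j (partialSum 0 t j)) (t j)
      = (g (∑ j, t j) * ∏ j, f j (t j)) ^ 2 /
        ∏ j, hrtDensity (f j) (F j) (ν j (partialSum 0 t j)) (t j) := by
    rw [mul_pow, ← Finset.prod_pow, mul_div_assoc, Finset.prod_div_distrib]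
  simp only [cost_zero_zero, hsq] at hint ⊢
  refine sq_integral_le_integral_sq_div ?_ ?_ hwi hw1.le hint
  · exact (ae_restrict_iff' (measurableSet_orthant N)).2 (.of_forall fun t ht =>
      Finset.prod_nonneg fun j _ => hrtDensity_nonneg (hν j _).le (hf j _ (ht j)))
  · refine .of_forall fun t hw => ?_
    obtain ⟨j, -, hj⟩ := Finset.prod_eq_zero_iff.1 hw
    have hfj : f j (t j) = 0 := by
      by_contra h
      exact hrtDensity_ne_zero (hν j _).ne h hj
    exact mul_eq_zero_of_right _ (Finset.prod_eq_zero (Finset.mem_univ j) hfj)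

end HRTCost

/-- the second moment of the HRT-SOC estimator
`T = g(S_N) ∏ᵢ e^{-μᵢ(S_{i-1}) Λ_{Xᵢ}(Xᵢ)}/(1-μᵢ(S_{i-1}))` along the controlled chain
equals the cost `C_{0,0}(μ₁,...,μ_N)`, is bounded below by the value `u(0,0)`, which in
turn is at least `α²`, for any admissible Markov controls with values in `(-∞,1)`. -/
theorem hrt_soc_second_moment (N : ℕ) (f : Fin N → ℝ → ℝ) (F : Fin N → ℝ → ℝ) (g : ℝ → ℝ)
    (μ : Fin N → ℝ → ℝ)
    (hfm : ∀ i, Measurable (f i)) (hf : ∀ i, ∀ x ∈ Ioi (0:ℝ), 0 ≤ f i x)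
    (hfpdf : ∀ i, ∫ x in Ioi (0:ℝ), f i x = 1)
    (hFc : ∀ i, Continuous (F i)) (hF0 : ∀ i, F i 0 = 0)
    (hFlt : ∀ i, ∀ x > 0, F i x < 1)
    (hderiv : ∀ i, ∀ x > 0, HasDerivAt (F i) (f i x) x)
    (hadm : ∀ i, Measurable (μ i) ∧ ∀ x, μ i x ∈ Iio (1:ℝ))
    (hfin : ∀ ν : Fin N → ℝ → ℝ, (∀ i, Measurable (ν i) ∧ ∀ x, ν i x ∈ Iio (1:ℝ)) →
      ∀ n : ℕ, ∀ s : ℝ, IntegrableOn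
        (fun t : Fin (N - n) → ℝ =>
          (g (s + ∑ j, t j))^2 *
            ∏ j : Fin (N - n),
              (f ⟨n + j, by have := j.isLt; omega⟩ (t j))^2 /
                hrtDensity (f ⟨n + j, by have := j.isLt; omega⟩)
                  (F ⟨n + j, by have := j.isLt; omega⟩)
                  (ν ⟨n + j, by have := j.isLt; omega⟩ (partialSum s t j)) (t j))
        {t : Fin (N - n) → ℝ | ∀ j, 0 < t j})
    (α : ℝ)
    (hα : α = ∫ x in {x : Fin N → ℝ | ∀ j, 0 < x j}, g (∑ j, x j) * ∏ j, f j (x j)) :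
    (∫ t in {t : Fin N → ℝ | ∀ j, 0 < t j},
        (g (∑ j, t j) *
          ∏ j, Real.exp (-(μ j (partialSum 0 t j)) * hazardFn (F j) (t j))
                 / (1 - μ j (partialSum 0 t j)))^2 *
          ∏ j, hrtDensity (f j) (F j) (μ j (partialSum 0 t j)) (t j))
      = cost N f (fun i m x => hrtDensity (f i) (F i) m x) g μ 0 0
    ∧ value N f (fun i m x => hrtDensity (f i) (F i) m x) g (Iio 1) 0 0
        ≤ cost N f (fun i m x => hrtDensity (f i) (F i) m x) g μ 0 0
    ∧ α ^ 2 ≤ value N f (fun i m x => hrtDensity (f i) (F i) m x) g (Iio 1) 0 0 := by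
  have hcost_nonneg (ν : {ν : Fin N → ℝ → ℝ // ∀ i, Measurable (ν i) ∧ ∀ x, ν i x ∈ Iio 1}) :
      0 ≤ cost N f (fun i m x => hrtDensity (f i) (F i) m x) g ν.1 0 0 :=
    cost_hrtDensity_nonneg hf fun i x => ((ν.2 i).2 x).out.le
  refine ⟨?_, ciInf_le ⟨0, forall_mem_range.2 hcost_nonneg⟩ ⟨μ, hadm⟩, ?_⟩
  · rw [cost_zero_zero]
    refine setIntegral_congr_fun (measurableSet_orthant N) fun t _ => ?_
    rw [mul_pow, ← Finset.prod_pow, mul_assoc, ← Finset.prod_mul_distrib]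
    simp only [sq_exp_div_mul_hrtDensity ((hadm _).2 _).out.ne]
  · have : Nonempty {ν : Fin N → ℝ → ℝ // ∀ i, Measurable (ν i) ∧ ∀ x, ν i x ∈ Iio 1} :=
      ⟨⟨fun _ _ => 0, fun _ => ⟨measurable_const, fun _ => mem_Iio.2 zero_lt_one⟩⟩⟩
    refine le_ciInf fun ν => hα ▸ sq_integral_le_cost_hrtDensity hfm hf hfpdf hFc hF0 hFlt
      hderiv (fun i => (ν.2 i).1) (fun i x => (ν.2 i).2 x) ?_
    have h := hfin ν.1 ν.2 0 0
    simp only [Fin.eta, zero_add] at h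
    exact h
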